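/- Fix μ ∈ Δ(S) and a nonempty finite message set M. (i) For every signal π (a family π(·|s) ∈ Δ(M), s ∈ S), setting p(m) = Σ_{s∈S} π(m|s) μ(s) and, when p(m) > 0, ν_{m,π}(s) = π(m|s) μ(s) / p(m), the measure τ_π = Σ_{m : p(m) > 0} p(m) δ_{ν_{m,π}} is a Borel probability measure on Δ(S) with barycenter μ and support of cardinality at most |M|. (ii) Conversely, if μ(s) > 0 for all s ∈ S, then for every Borel probability measure τ on Δ(S) with barycenter μ and support of at most |M| points, there exists a signal π such that τ = τ_π. -/

import Mathlib

open MeasureTheory Finset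

noncomputable section

/-- Expected utility `Σ_s u(s,a) ν(s)` of action `a` under belief `ν ∈ Δ(S)`. -/
def expUtil {S α : Type*} [Fintype S] (u : S → α → ℝ) (ν : stdSimplex ℝ S) (a : α) : ℝ :=
  ∑ s, u s a * (ν : S → ℝ) s

/-- Admissible (optimal) actions `A*(ν) = argmax_a Σ_s u(s,a) ν(s)`. -/
def admissible {S α : Type*} [Fintype S] (u : S → α → ℝ) (ν : stdSimplex ℝ S) : Set α :=
  {a | ∀ b, expUtil u ν b ≤ expUtil u ν a}

/-- `p(m) = Σ_s π(m|s) μ(s)`, the total probability of message `m` under signal `π` and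
prior `μ`. -/
def msgProb {S M : Type*} [Fintype S] (π : S → M → ℝ) (μ : stdSimplex ℝ S) (m : M) : ℝ :=
  ∑ s, π s m * (μ : S → ℝ) s

/-- The measure `τ_π = Σ_{m : p(m) > 0} p(m) δ_{ν_m}` on `Δ(S)` induced by a signal `π`,
where `ν m` is the posterior of message `m`. -/
def signalMeasure {S M : Type*} [Fintype S] [Fintype M] (π : S → M → ℝ)
    (μ : stdSimplex ℝ S) (ν : M → stdSimplex ℝ S) : Measure (stdSimplex ℝ S) :=
  ∑ m ∈ Finset.univ.filter (fun m => 0 < msgProb π μ m),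
    ENNReal.ofReal (msgProb π μ m) • Measure.dirac (ν m)

/-!
Bayes' rule `ν_m(s) p(m) = π(m|s) μ(s)` turns the barycenter `Σ_m p(m) ν_m` of `τ_π` into
`Σ_m π(m|s) μ(s) = μ(s)`, and the total mass `Σ_m p(m)` into `Σ_s μ(s) = 1`.

Conversely, a probability measure carried by a finite set `F` is `Σ_{x ∈ F} τ{x} δ_x`; since
`|F| ≤ |M|`, its atoms can be labelled injectively by messages, giving weights `q` and points `ν`
with `Σ_m q(m) ν_m = μ`. Reading Bayes' rule backwards, `π(m|s) = q(m) ν_m(s) / μ(s)` is a signal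
(the barycenter condition makes each `π(·|s)` sum to one), and its message probabilities are `q`,
so `τ_π = τ`.
-/

section WeightedDirac

variable {α ι : Type*} [MeasurableSpace α]

lemma finsetSum_smul_dirac_apply_of_forall_mem (G : Finset ι) (c : ι → ℝ) (x : ι → α)
    {A : Set α} (hA : ∀ i ∈ G, x i ∈ A) :
    (∑ i ∈ G, ENNReal.ofReal (c i) • Measure.dirac (x i)) A = ∑ i ∈ G, ENNReal.ofReal (c i) := by
  simp only [Measure.coe_finsetSum, Finset.sum_apply, Measure.smul_apply, smul_eq_mul]
  exact Finset.sum_congr rfl fun i hi => by rw [Measure.dirac_apply_of_mem (hA i hi), mul_one]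

lemma integral_finsetSum_smul_dirac [MeasurableSingletonClass α] (G : Finset ι) {c : ι → ℝ}
    (hc : ∀ i ∈ G, 0 ≤ c i) (x : ι → α) (f : α → ℝ) :
    ∫ a, f a ∂(∑ i ∈ G, ENNReal.ofReal (c i) • Measure.dirac (x i)) = ∑ i ∈ G, c i * f (x i) := by
  rw [integral_finsetSum_measure fun i _ =>
    (integrable_dirac enorm_lt_top).smul_measure ENNReal.ofReal_ne_top]
  refine Finset.sum_congr rfl fun i hi => ?_
  rw [integral_smul_measure, integral_dirac, ENNReal.toReal_ofReal (hc i hi), smul_eq_mul]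

lemma exists_eq_sum_smul_dirac_of_ae_mem_finset [MeasurableSingletonClass α] [Nonempty α]
    [Fintype ι] (τ : Measure α) [IsFiniteMeasure τ] {F : Finset α} (hF : ∀ᵐ a ∂τ, a ∈ F)
    (hcard : F.card ≤ Fintype.card ι) :
    ∃ (c : ι → ℝ) (x : ι → α), (∀ i, 0 ≤ c i) ∧
      τ = ∑ i, ENNReal.ofReal (c i) • Measure.dirac (x i) := by
  -- label the atoms by `ι` through an embedding; unlabelled indices get weight `0`
  obtain ⟨g⟩ : Nonempty (F ↪ ι) :=
    Function.Embedding.nonempty_iff_card_le.2 (by rwa [Fintype.card_coe])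
  refine ⟨Function.extend g (fun a => τ.real {a.1}) 0,
    Function.extend g Subtype.val fun _ => Classical.arbitrary α, fun i => ?_, ?_⟩
  · by_cases hi : ∃ a, g a = i
    · obtain ⟨a, rfl⟩ := hi
      rw [g.injective.extend_apply]
      exact measureReal_nonneg
    · rw [Function.extend_apply' _ _ _ hi, Pi.zero_apply]
  · refine (Measure.ae_mem_finset_iff.1 hF).trans ?_
    rw [← Finset.sum_coe_sort F]
    refine Fintype.sum_of_injective g g.injective _ _ (fun i hi => ?_) fun a => ?_
    · rw [Function.extend_apply' _ _ _ (by simpa using hi), Pi.zero_apply, ENNReal.ofReal_zero,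
        zero_smul]
    · rw [g.injective.extend_apply, g.injective.extend_apply, ofReal_measureReal]

end WeightedDirac

section SignalToMeasure

variable {S M : Type*} [Fintype S] [Fintype M] {π : S → M → ℝ} {μ : stdSimplex ℝ S}

lemma mul_le_msgProb (hπ : ∀ s, π s ∈ stdSimplex ℝ M) (s : S) (m : M) :
    π s m * (μ : S → ℝ) s ≤ msgProb π μ m :=
  Finset.single_le_sum (f := fun t => π t m * (μ : S → ℝ) t)
    (fun t _ => mul_nonneg ((hπ t).1 m) (stdSimplex.zero_le μ t)) (Finset.mem_univ s)

lemma msgProb_nonneg (hπ : ∀ s, π s ∈ stdSimplex ℝ M) (m : M) : 0 ≤ msgProb π μ m :=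
  Finset.sum_nonneg fun s _ => mul_nonneg ((hπ s).1 m) (stdSimplex.zero_le μ s)

lemma sum_msgProb (hπ : ∀ s, π s ∈ stdSimplex ℝ M) : ∑ m, msgProb π μ m = 1 := by
  simp only [msgProb]
  rw [Finset.sum_comm]
  simp only [← Finset.sum_mul, (hπ _).2, one_mul]
  exact stdSimplex.sum_eq_one μ

lemma signalMeasure_apply_eq_one (hπ : ∀ s, π s ∈ stdSimplex ℝ M) (ν : M → stdSimplex ℝ S)
    {A : Set (stdSimplex ℝ S)} (hA : ∀ m, ν m ∈ A) : signalMeasure π μ ν A = 1 := by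
  rw [signalMeasure, finsetSum_smul_dirac_apply_of_forall_mem _ _ _ fun m _ => hA m,
    Finset.sum_filter_of_ne fun m _ h => ENNReal.ofReal_pos.1 (pos_iff_ne_zero.2 h),
    ← ENNReal.ofReal_sum_of_nonneg fun m _ => msgProb_nonneg hπ m, sum_msgProb hπ,
    ENNReal.ofReal_one]

lemma integral_signalMeasure (hπ : ∀ s, π s ∈ stdSimplex ℝ M) {ν : M → stdSimplex ℝ S}
    (hν : ∀ m, 0 < msgProb π μ m →
      ∀ s, (ν m : S → ℝ) s * msgProb π μ m = π s m * (μ : S → ℝ) s) (s : S) :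
    ∫ ρ, (ρ : S → ℝ) s ∂(signalMeasure π μ ν) = (μ : S → ℝ) s := by
  rw [signalMeasure, integral_finsetSum_smul_dirac _ (fun m _ => msgProb_nonneg hπ m)]
  calc ∑ m ∈ Finset.univ.filter (fun m => 0 < msgProb π μ m), msgProb π μ m * (ν m : S → ℝ) s
      = ∑ m ∈ Finset.univ.filter (fun m => 0 < msgProb π μ m), π s m * (μ : S → ℝ) s :=
        Finset.sum_congr rfl fun m hm => by
          rw [mul_comm, hν m (Finset.mem_filter.1 hm).2]
    _ = ∑ m, π s m * (μ : S → ℝ) s := Finset.sum_filter_of_ne fun m _ h =>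
        ((mul_nonneg ((hπ s).1 m) (stdSimplex.zero_le μ s)).lt_of_ne' h).trans_le
          (mul_le_msgProb hπ s m)
    _ = (μ : S → ℝ) s := by rw [← Finset.sum_mul, (hπ s).2, one_mul]

end SignalToMeasure

section MeasureToSignal

variable {S M : Type*} [Fintype S]

def splittingSignal (μ : stdSimplex ℝ S) (q : M → ℝ) (ν : M → stdSimplex ℝ S) : S → M → ℝ :=
  fun s m => q m * (ν m : S → ℝ) s / (μ : S → ℝ) s

variable {μ : stdSimplex ℝ S} {q : M → ℝ} {ν : M → stdSimplex ℝ S}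

lemma splittingSignal_mem [Fintype M] (hμ : ∀ s, 0 < (μ : S → ℝ) s) (hq : ∀ m, 0 ≤ q m)
    (hbar : ∀ s, ∑ m, q m * (ν m : S → ℝ) s = (μ : S → ℝ) s) (s : S) :
    splittingSignal μ q ν s ∈ stdSimplex ℝ M :=
  ⟨fun m => div_nonneg (mul_nonneg (hq m) (stdSimplex.zero_le (ν m) s)) (hμ s).le, by
    simp only [splittingSignal]
    rw [← Finset.sum_div, hbar s, div_self (hμ s).ne']⟩

lemma msgProb_splittingSignal (hμ : ∀ s, 0 < (μ : S → ℝ) s) :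
    msgProb (splittingSignal μ q ν) μ = q := by
  funext m
  simp only [msgProb, splittingSignal, div_mul_cancel₀ _ (hμ _).ne', ← Finset.mul_sum]
  rw [stdSimplex.sum_eq_one (ν m), mul_one]

lemma posterior_splittingSignal (hμ : ∀ s, 0 < (μ : S → ℝ) s) (m : M) (s : S) :
    (ν m : S → ℝ) s * msgProb (splittingSignal μ q ν) μ m
      = splittingSignal μ q ν s m * (μ : S → ℝ) s := by
  rw [msgProb_splittingSignal hμ, splittingSignal, div_mul_cancel₀ _ (hμ s).ne', mul_comm]

lemma signalMeasure_splittingSignal [Fintype M] (hμ : ∀ s, 0 < (μ : S → ℝ) s) :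
    signalMeasure (splittingSignal μ q ν) μ ν
      = ∑ m, ENNReal.ofReal (q m) • Measure.dirac (ν m) := by
  rw [signalMeasure, msgProb_splittingSignal hμ]
  refine Finset.sum_filter_of_ne fun m _ h => ?_
  by_contra hm
  rw [ENNReal.ofReal_eq_zero.2 (not_lt.1 hm), zero_smul] at h
  exact h rfl

end MeasureToSignal

theorem signal_measure_correspondence_general {S M : Type*} [Fintype S]
    [Fintype M] (μ : stdSimplex ℝ S) :
    (∀ π : S → M → ℝ, (∀ s, π s ∈ stdSimplex ℝ M) →
      ∀ ν : M → stdSimplex ℝ S,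
        (∀ m, 0 < msgProb π μ m →
          ∀ s, (ν m : S → ℝ) s * msgProb π μ m = π s m * (μ : S → ℝ) s) →
        IsProbabilityMeasure (signalMeasure π μ ν) ∧
        (∀ s, (∫ ρ, (ρ : S → ℝ) s ∂(signalMeasure π μ ν)) = (μ : S → ℝ) s) ∧
        ∃ F : Finset (stdSimplex ℝ S), F.card ≤ Fintype.card M ∧
          signalMeasure π μ ν (↑F) = 1) ∧
    ((∀ s, 0 < (μ : S → ℝ) s) →
      ∀ τ : ProbabilityMeasure (stdSimplex ℝ S),
        (∀ s, (∫ ρ, (ρ : S → ℝ) s ∂(τ : Measure (stdSimplex ℝ S))) = (μ : S → ℝ) s) →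
        (∃ F : Finset (stdSimplex ℝ S), F.card ≤ Fintype.card M ∧
          (τ : Measure (stdSimplex ℝ S)) (↑F) = 1) →
        ∃ π : S → M → ℝ, (∀ s, π s ∈ stdSimplex ℝ M) ∧
          ∃ ν : M → stdSimplex ℝ S,
            (∀ m, 0 < msgProb π μ m →
              ∀ s, (ν m : S → ℝ) s * msgProb π μ m = π s m * (μ : S → ℝ) s) ∧
            (τ : Measure (stdSimplex ℝ S)) = signalMeasure π μ ν) := by
  refine ⟨fun π hπ ν hν => ⟨⟨signalMeasure_apply_eq_one hπ ν fun _ => Set.mem_univ _⟩,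
    integral_signalMeasure hπ hν, Finset.univ.image ν, Finset.card_image_le,
    signalMeasure_apply_eq_one hπ ν fun m => by simp⟩, ?_⟩
  rintro hμ τ hbar ⟨F, hcard, hF⟩
  have : Nonempty (stdSimplex ℝ S) := ⟨μ⟩
  obtain ⟨q, ν, hq, hτ⟩ := exists_eq_sum_smul_dirac_of_ae_mem_finset (τ : Measure _)
    ((mem_ae_iff_prob_eq_one F.measurableSet).2 hF) hcard
  have hqν : ∀ s, ∑ m, q m * (ν m : S → ℝ) s = (μ : S → ℝ) s := fun s => by
    rw [← hbar s, hτ, integral_finsetSum_smul_dirac _ fun m _ => hq m]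
  exact ⟨splittingSignal μ q ν, splittingSignal_mem hμ hq hqν, ν,
    fun m _ => posterior_splittingSignal hμ m, by rw [signalMeasure_splittingSignal hμ, hτ]⟩

/-- (i) For every signal `π` (a family `π(·|s) ∈ Δ(M)`), with posteriors
`ν_{m,π}(s) = π(m|s)μ(s)/p(m)` (for `p(m) > 0`), the measure
`τ_π = Σ_{m : p(m)>0} p(m) δ_{ν_{m,π}}` is a Borel probability measure on `Δ(S)` with
barycenter `μ` and support of cardinality at most `|M|`.
(ii) Conversely, if `μ` has full support, every Borel probability measure on `Δ(S)` with
barycenter `μ` supported on at most `|M|` points is of the form `τ_π` for some signal `π`. -/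
theorem signal_measure_correspondence {S M : Type*} [Fintype S] [Nonempty S]
    [Fintype M] [Nonempty M] (μ : stdSimplex ℝ S) :
    (∀ π : S → M → ℝ, (∀ s, π s ∈ stdSimplex ℝ M) →
      ∀ ν : M → stdSimplex ℝ S,
        (∀ m, 0 < msgProb π μ m →
          ∀ s, (ν m : S → ℝ) s * msgProb π μ m = π s m * (μ : S → ℝ) s) →
        IsProbabilityMeasure (signalMeasure π μ ν) ∧
        (∀ s, (∫ ρ, (ρ : S → ℝ) s ∂(signalMeasure π μ ν)) = (μ : S → ℝ) s) ∧
        ∃ F : Finset (stdSimplex ℝ S), F.card ≤ Fintype.card M ∧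
          signalMeasure π μ ν (↑F) = 1) ∧
    ((∀ s, 0 < (μ : S → ℝ) s) →
      ∀ τ : ProbabilityMeasure (stdSimplex ℝ S),
        (∀ s, (∫ ρ, (ρ : S → ℝ) s ∂(τ : Measure (stdSimplex ℝ S))) = (μ : S → ℝ) s) →
        (∃ F : Finset (stdSimplex ℝ S), F.card ≤ Fintype.card M ∧
          (τ : Measure (stdSimplex ℝ S)) (↑F) = 1) →
        ∃ π : S → M → ℝ, (∀ s, π s ∈ stdSimplex ℝ M) ∧
          ∃ ν : M → stdSimplex ℝ S,
            (∀ m, 0 < msgProb π μ m →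
              ∀ s, (ν m : S → ℝ) s * msgProb π μ m = π s m * (μ : S → ℝ) s) ∧
            (τ : Measure (stdSimplex ℝ S)) = signalMeasure π μ ν) :=
  signal_measure_correspondence_general μ

end
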